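/- arXiv:2007.07704 — 3 statements merged into one kernel-verified Lean document; each statement's English description precedes it below -/
import Mathlib

section
/- If f is convex and differentiable, and x_t evolves by continuous-time mirror descent dz_t/dt = -∇f(x_t) with x_t = ∇Φ*(z_t), then the time-averaged suboptimality satisfies (1/T)∫₀ᵀ (f(x_t) - f(x*)) dt ≤ D²_{Φ,X}/(2T), where x* is a minimizer of f over X. -/
/-!
The Bregman divergence `V t = D_{Φ*}(z_t, z*)` is a Lyapunov function. Along the flow its
derivative is `-⟪∇f(x_t), x_t - x*⟫`, which by convexity of `f` is at most
`-(f(x_t) - f(x*))`. Integrating over `[0, T]` gives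
`∫₀ᵀ (f(x_t) - f(x*)) dt ≤ V 0 - V T ≤ V 0 ≤ D²_{Φ,X} / 2`, since `V T ≥ 0` by convexity of `Φ*`.
-/

open MeasureTheory Set
open scoped RealInnerProductSpace

section Convex

variable {E : Type*} [NormedAddCommGroup E] [NormedSpace ℝ E] {s : Set E} {f : E → ℝ}
  {f' : E →L[ℝ] ℝ} {x y : E}

theorem ConvexOn.add_fderiv_sub_le (hf : ConvexOn ℝ s f) (hx : x ∈ s) (hy : y ∈ s)
    (hf' : HasFDerivAt f f' x) : f x + f' (y - x) ≤ f y := by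
  set ℓ : ℝ →ᵃ[ℝ] E := AffineMap.lineMap x y
  have hℓ0 : ℓ 0 = x := AffineMap.lineMap_apply_zero x y
  have hℓ1 : ℓ 1 = y := AffineMap.lineMap_apply_one x y
  have hψ : ConvexOn ℝ (ℓ ⁻¹' s) (f ∘ ℓ) := hf.comp_affineMap ℓ
  have hψ' : HasDerivAt (f ∘ ℓ) (f' (y - x)) 0 := by
    rw [← hℓ0] at hf'
    exact hf'.comp_hasDerivAt 0 AffineMap.hasDerivAt_lineMap
  have := hψ.le_slope_of_hasDerivAt (by rwa [mem_preimage, hℓ0]) (by rwa [mem_preimage, hℓ1])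
    zero_lt_one hψ'
  rw [slope_def_field, Function.comp_apply, Function.comp_apply, hℓ0, hℓ1] at this
  linarith

end Convex

section Gradient

variable {E : Type*} [NormedAddCommGroup E] [InnerProductSpace ℝ E] [CompleteSpace E]
  {s : Set E} {f : E → ℝ} {g x y : E}

theorem ConvexOn.add_inner_gradient_sub_le (hf : ConvexOn ℝ s f) (hx : x ∈ s) (hy : y ∈ s)
    (hg : HasGradientAt f g x) : f x + ⟪g, y - x⟫ ≤ f y := by
  simpa using hf.add_fderiv_sub_le hx hy hg.hasFDerivAt

def bregmanDiv (φ : E → ℝ) (gradφ : E → E) (x y : E) : ℝ :=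
  φ x - φ y - ⟪gradφ y, x - y⟫

variable {φ : E → ℝ} {gradφ : E → E}

theorem bregmanDiv_nonneg (hφ : ConvexOn ℝ s φ) (hx : x ∈ s) (hy : y ∈ s)
    (hgrad : HasGradientAt φ (gradφ y) y) : 0 ≤ bregmanDiv φ gradφ x y := by
  have := hφ.add_inner_gradient_sub_le hy hx hgrad
  unfold bregmanDiv
  linarith

theorem HasDerivAt.bregmanDiv_left {c : ℝ → E} {c' : E} {t : ℝ}
    (hgrad : HasGradientAt φ (gradφ (c t)) (c t)) (hc : HasDerivAt c c' t) :
    HasDerivAt (fun t ↦ bregmanDiv φ gradφ (c t) y) ⟪gradφ (c t) - gradφ y, c'⟫ t := by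
  have hφc : HasDerivAt (fun t ↦ φ (c t)) ⟪gradφ (c t), c'⟫ t := by
    simpa [Function.comp_def] using hgrad.hasFDerivAt.comp_hasDerivAt t hc
  have hlin : HasDerivAt (fun t ↦ ⟪gradφ y, c t - y⟫) ⟪gradφ y, c'⟫ t := by
    simpa [Function.comp_def] using
      (innerSL ℝ (gradφ y)).hasFDerivAt.comp_hasDerivAt t (hc.sub_const y)
  rw [inner_sub_left]
  exact (hφc.sub_const _).sub hlin

end Gradient

namespace intervalIntegral

/-- No integrability of `g` is assumed: if it fails, the integral is `0` by convention, and
`W b - W a ≥ 0` because `W` is monotone. -/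
theorem integral_le_sub_of_hasDerivAt_of_nonneg_of_le {g W W' : ℝ → ℝ} {a b : ℝ} (hab : a ≤ b)
    (hcont : ContinuousOn W (Icc a b)) (hderiv : ∀ t ∈ Ioo a b, HasDerivAt W (W' t) t)
    (hg : ∀ t ∈ Ioo a b, 0 ≤ g t) (hgW : ∀ t ∈ Ioo a b, g t ≤ W' t) :
    ∫ t in a..b, g t ≤ W b - W a := by
  by_cases hint : IntegrableOn g (Icc a b)
  · exact integral_le_sub_of_hasDeriv_right_of_le hab hcont
      (fun t ht ↦ (hderiv t ht).hasDerivWithinAt) hint hgW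
  · have hnot : ¬IntervalIntegrable g volume a b := by
      rwa [intervalIntegrable_iff_integrableOn_Icc_of_le hab]
    have hmono : MonotoneOn W (Icc a b) := by
      refine monotoneOn_of_hasDerivWithinAt_nonneg (f' := W') (convex_Icc a b) hcont ?_ ?_ <;>
        rw [interior_Icc]
      exacts [fun t ht ↦ (hderiv t ht).hasDerivWithinAt, fun t ht ↦ (hg t ht).trans (hgW t ht)]
    rw [integral_undef hnot, sub_nonneg]
    exact hmono (left_mem_Icc.2 hab) (right_mem_Icc.2 hab) hab

end intervalIntegral

/-- Convergence of continuous-time mirror descent for a convex objective: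
the time-averaged suboptimality is bounded by `D²_{Φ,X} / (2T)`. -/
theorem ismd_md_convex_convergence
    (d : ℕ)
    (f Φstar : EuclideanSpace ℝ (Fin d) → ℝ)
    (f' gΦstar : EuclideanSpace ℝ (Fin d) → EuclideanSpace ℝ (Fin d))
    (X : Set (EuclideanSpace ℝ (Fin d)))
    (z x : ℝ → EuclideanSpace ℝ (Fin d))
    (zstar xstar : EuclideanSpace ℝ (Fin d))
    (DPhiX T : ℝ) (hT : 0 < T)
    -- f is convex and differentiable with gradient f'
    (hf_conv : ConvexOn ℝ Set.univ f)
    (hf_grad : ∀ w, HasGradientAt f (f' w) w)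
    -- Φ* is the convex conjugate of the mirror map, with gradient gΦ* mapping into X
    (hΦ_grad : ∀ w, HasGradientAt Φstar (gΦstar w) w)
    (hΦ_conv : ConvexOn ℝ Set.univ Φstar)
    (hrange : ∀ w, gΦstar w ∈ X)
    -- mirror descent dynamics: dz_t/dt = -∇f(x_t), x_t = ∇Φ*(z_t)
    (hdyn : ∀ t, HasDerivAt z (-(f' (x t))) t)
    (hx : ∀ t, x t = gΦstar (z t))
    -- x* minimizes f over X, with z* a mirror point of x*
    (hmin : xstar ∈ X ∧ ∀ w ∈ X, f xstar ≤ f w)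
    (hstar : gΦstar zstar = xstar)
    -- the initial Bregman divergence D_{Φ*}(z_0,z*) = D_Φ(x*,x_0) is at most D²_{Φ,X}/2
    (hD0 : Φstar (z 0) - Φstar zstar - (inner ℝ (gΦstar zstar) (z 0 - zstar) : ℝ)
      ≤ DPhiX ^ 2 / 2) :
    (1 / T) * ∫ t in (0:ℝ)..T, (f (x t) - f xstar) ≤ DPhiX ^ 2 / (2 * T) := by
  set V : ℝ → ℝ := fun t ↦ bregmanDiv Φstar gΦstar (z t) zstar
  have hV : ∀ t, HasDerivAt (fun t ↦ -V t) ⟪f' (x t), x t - xstar⟫ t := fun t ↦ by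
    have := ((hdyn t).bregmanDiv_left (y := zstar) (hΦ_grad (z t))).neg
    rwa [← hx, hstar, inner_neg_right, neg_neg, real_inner_comm] at this
  have hsubopt : ∀ t, f (x t) - f xstar ≤ ⟪f' (x t), x t - xstar⟫ := fun t ↦ by
    have := hf_conv.add_inner_gradient_sub_le (mem_univ _) (mem_univ xstar) (hf_grad (x t))
    rw [← neg_sub, inner_neg_right] at this
    linarith
  have hsubopt_nonneg : ∀ t, 0 ≤ f (x t) - f xstar := fun t ↦
    sub_nonneg.2 (hmin.2 _ (hx t ▸ hrange (z t)))
  have hint : ∫ t in (0:ℝ)..T, (f (x t) - f xstar) ≤ -V T - -V 0 :=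
    intervalIntegral.integral_le_sub_of_hasDerivAt_of_nonneg_of_le hT.le
      (HasDerivAt.continuousOn fun t _ ↦ hV t) (fun t _ ↦ hV t)
      (fun t _ ↦ hsubopt_nonneg t) (fun t _ ↦ hsubopt t)
  have hVT : 0 ≤ V T := bregmanDiv_nonneg hΦ_conv (mem_univ _) (mem_univ _) (hΦ_grad zstar)
  have hV0 : V 0 ≤ DPhiX ^ 2 / 2 := hD0
  rw [one_div_mul_eq_div, ← div_div, div_le_div_iff_of_pos_right hT]
  linarith
end

section
/- If f is μ-strongly convex relative to the mirror map Φ (i.e. D_f(x,y) ≥ μ D_Φ(x,y) for all x,y), then along continuous-time mirror descent dz_t/dt = -∇f(x_t), x_t = ∇Φ*(z_t), the Bregman divergence to the optimum decays exponentially: D_Φ(x*, x_t) ≤ e^{-μt} D_Φ(x*, x_0). -/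
open MeasureTheory

/-- Bregman divergence of a function `h` with gradient field `g`. -/
noncomputable def breg {d : ℕ} (h : EuclideanSpace ℝ (Fin d) → ℝ)
    (g : EuclideanSpace ℝ (Fin d) → EuclideanSpace ℝ (Fin d))
    (a b : EuclideanSpace ℝ (Fin d)) : ℝ :=
  h a - h b - (inner ℝ (g b) (a - b) : ℝ)

/-!
The Lyapunov function is `V t = D_{Φ*}(z_t, z*) = D_Φ(x*, x_t)`. Differentiating the first form
along the flow gives `V' = ⟪x_t - x*, -∇f(x_t)⟫ = ⟪∇f(x_t), x* - x_t⟫`, and relative strong convexity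
together with `f x* ≤ f x_t` (as `x_t ∈ X`) bounds this by `-μ V`. Grönwall's inequality then
gives the decay.
-/

open Real

theorem HasGradientAt.comp_hasDerivAt {E : Type*} [NormedAddCommGroup E]
    [InnerProductSpace ℝ E] [CompleteSpace E] {h : E → ℝ} {g : E} {z : ℝ → E} {z' : E} {t : ℝ}
    (hh : HasGradientAt h g (z t)) (hz : HasDerivAt z z' t) :
    HasDerivAt (fun s => h (z s)) (inner ℝ g z') t := by
  simpa [InnerProductSpace.toDual_apply_apply, Function.comp_def] using
    hh.hasFDerivAt.comp_hasDerivAt t hz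

theorem hasDerivAt_breg_comp {d : ℕ} {h : EuclideanSpace ℝ (Fin d) → ℝ}
    {g : EuclideanSpace ℝ (Fin d) → EuclideanSpace ℝ (Fin d)} {z : ℝ → EuclideanSpace ℝ (Fin d)}
    {z' c : EuclideanSpace ℝ (Fin d)} {t : ℝ}
    (hh : HasGradientAt h (g (z t)) (z t)) (hz : HasDerivAt z z' t) :
    HasDerivAt (fun s => breg h g (z s) c) (inner ℝ (g (z t) - g c) z') t := by
  have hlin : HasDerivAt (fun s => inner ℝ (g c) (z s - c)) (inner ℝ (g c) z') t := by
    simpa [Function.comp_def] using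
      (innerSL ℝ (g c)).hasFDerivAt.comp_hasDerivAt t (hz.sub_const c)
  rw [inner_sub_left]
  exact ((hh.comp_hasDerivAt hz).sub_const (h c)).sub hlin

theorem inner_grad_le_neg_mul_breg_of_le {d : ℕ} {f Φ : EuclideanSpace ℝ (Fin d) → ℝ}
    {f' gΦ : EuclideanSpace ℝ (Fin d) → EuclideanSpace ℝ (Fin d)} {a b : EuclideanSpace ℝ (Fin d)}
    {μ : ℝ} (hrel : μ * breg Φ gΦ a b ≤ breg f f' a b) (hab : f a ≤ f b) :
    inner ℝ (f' b) (a - b) ≤ -μ * breg Φ gΦ a b := by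
  unfold breg at hrel ⊢
  linarith

theorem le_exp_mul_of_hasDerivAt_le_mul {V V' : ℝ → ℝ} {K a t : ℝ}
    (hV : ∀ s, HasDerivAt V (V' s) s) (hbound : ∀ s, V' s ≤ K * V s) (hat : a ≤ t) :
    V t ≤ exp (K * (t - a)) * V a := by
  have hgronwall := le_gronwallBound_of_liminf_deriv_right_le (f' := V') (ε := 0) (b := t)
    (fun s _ => (hV s).continuousAt.continuousWithinAt)
    (fun s _ _ hr => (hV s).hasDerivWithinAt.liminf_right_slope_le hr) le_rfl
    (fun s _ => by simpa using hbound s) t ⟨hat, le_rfl⟩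
  rwa [gronwallBound_ε0, mul_comm] at hgronwall

theorem ismd_md_strongly_convex_convergence_general
    (d : ℕ)
    (f Φ Φstar : EuclideanSpace ℝ (Fin d) → ℝ)
    (f' gΦ gΦstar : EuclideanSpace ℝ (Fin d) → EuclideanSpace ℝ (Fin d))
    (X : Set (EuclideanSpace ℝ (Fin d)))
    (z x : ℝ → EuclideanSpace ℝ (Fin d))
    (zstar xstar : EuclideanSpace ℝ (Fin d))
    (μ T : ℝ) (hT : 0 ≤ T)
    -- gradients
    (hΦstar_grad : ∀ w, HasGradientAt Φstar (gΦstar w) w)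
    (hrange : ∀ w, gΦstar w ∈ X)
    -- f is μ-strongly convex relative to Φ: D_f(a,b) ≥ μ D_Φ(a,b)
    (hrel : ∀ a b, μ * breg Φ gΦ a b ≤ breg f f' a b)
    -- mirror descent dynamics: dz_t/dt = -∇f(x_t), x_t = ∇Φ*(z_t)
    (hdyn : ∀ t, HasDerivAt z (-(f' (x t))) t)
    (hx : ∀ t, x t = gΦstar (z t))
    -- x* minimizes f over X, z* is its mirror point
    (hmin : xstar ∈ X ∧ ∀ w ∈ X, f xstar ≤ f w)
    (hstar : gΦstar zstar = xstar)
    -- the mirror identity D_{Φ*}(z, z*) = D_Φ(x*, ∇Φ*(z))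
    (hid : ∀ w, breg Φstar gΦstar w zstar = breg Φ gΦ xstar (gΦstar w)) :
    breg Φ gΦ xstar (x T) ≤ Real.exp (-μ * T) * breg Φ gΦ xstar (x 0) := by
  set V : ℝ → ℝ := fun t => breg Φstar gΦstar (z t) zstar
  have hV : ∀ t, V t = breg Φ gΦ xstar (x t) := fun t => by simp only [V, hid, hx]
  have hV' : ∀ t, HasDerivAt V (inner ℝ (x t - xstar) (-(f' (x t)))) t := fun t => by
    simpa only [← hx, hstar] using
      hasDerivAt_breg_comp (c := zstar) (hΦstar_grad (z t)) (hdyn t)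
  have hdecay : ∀ t, inner ℝ (x t - xstar) (-(f' (x t))) ≤ -μ * V t := fun t => by
    rw [inner_neg_right, ← inner_neg_left, neg_sub, real_inner_comm, hV]
    exact inner_grad_le_neg_mul_breg_of_le (hrel _ _) (hmin.2 _ (hx t ▸ hrange (z t)))
  simpa only [hV, sub_zero] using le_exp_mul_of_hasDerivAt_le_mul hV' hdecay hT

/-- For an objective `f` that is μ-strongly convex relative to the mirror map Φ,
continuous-time mirror descent satisfies `D_Φ(x*, x_T) ≤ e^{-μT} D_Φ(x*, x_0)`. -/
theorem ismd_md_strongly_convex_convergence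
    (d : ℕ)
    (f Φ Φstar : EuclideanSpace ℝ (Fin d) → ℝ)
    (f' gΦ gΦstar : EuclideanSpace ℝ (Fin d) → EuclideanSpace ℝ (Fin d))
    (X : Set (EuclideanSpace ℝ (Fin d)))
    (z x : ℝ → EuclideanSpace ℝ (Fin d))
    (zstar xstar : EuclideanSpace ℝ (Fin d))
    (μ T : ℝ) (hμ : 0 < μ) (hT : 0 ≤ T)
    -- gradients
    (hf_grad : ∀ w, HasGradientAt f (f' w) w)
    (hΦ_grad : ∀ w, HasGradientAt Φ (gΦ w) w)
    (hΦstar_grad : ∀ w, HasGradientAt Φstar (gΦstar w) w)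
    (hrange : ∀ w, gΦstar w ∈ X)
    -- f is μ-strongly convex relative to Φ: D_f(a,b) ≥ μ D_Φ(a,b)
    (hrel : ∀ a b, μ * breg Φ gΦ a b ≤ breg f f' a b)
    -- mirror descent dynamics: dz_t/dt = -∇f(x_t), x_t = ∇Φ*(z_t)
    (hdyn : ∀ t, HasDerivAt z (-(f' (x t))) t)
    (hx : ∀ t, x t = gΦstar (z t))
    -- x* minimizes f over X, z* is its mirror point
    (hmin : xstar ∈ X ∧ ∀ w ∈ X, f xstar ≤ f w)
    (hstar : gΦstar zstar = xstar)
    -- the mirror identity D_{Φ*}(z, z*) = D_Φ(x*, ∇Φ*(z))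
    (hid : ∀ w, breg Φstar gΦstar w zstar = breg Φ gΦ xstar (gΦstar w)) :
    breg Φ gΦ xstar (x T) ≤ Real.exp (-μ * T) * breg Φ gΦ xstar (x 0) :=
  ismd_md_strongly_convex_convergence_general d f Φ Φstar f' gΦ gΦstar X z x zstar xstar μ T hT
    hΦstar_grad hrange hrel hdyn hx hmin hstar hid
end

section
/- The discrete interacting mirror descent update z_{k+1}^i = z_k^i - ∇f(x_k^i) + Σ_j A_{ij}(z_k^j - z_k^i), x_{k+1}^i = ∇Φ*(z_{k+1}^i), with A doubly stochastic, is equivalent to the Bregman-proximal update x_{k+1}^i = argmin_{x∈X} { ∇f(x_k^i)ᵀx + Σ_j A_{ij} D_Φ(x, x_k^j) }. -/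
/-!
Since the rows of `A` sum to one, the update reads `z_{k+1}^i = ∑_j A_{ij} z_k^j - ∇f(x_k^i)`.
Expanding the Bregman divergences with `∇Φ(x_k^j) = z_k^j`, the proximal objective becomes
`Φ(x) - ⟨z_{k+1}^i, x⟩` plus a constant independent of `x`, and the minimiser of that over `X`
is `∇Φ*(z_{k+1}^i) = x_{k+1}^i` by the defining property of the mirror map.
-/

open Finset
open scoped InnerProductSpace

variable {ι : Type*} [Fintype ι]

theorem sum_smul_sub_of_sum_eq_one {R M : Type*} [Ring R] [AddCommGroup M] [Module R M]
    {a : ι → R} (ha : ∑ j, a j = 1) (z : ι → M) (z₀ : M) :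
    ∑ j, a j • (z j - z₀) = (∑ j, a j • z j) - z₀ := by
  simp only [smul_sub, sum_sub_distrib, ← sum_smul, ha, one_smul]

variable {E : Type*} [NormedAddCommGroup E] [InnerProductSpace ℝ E]

/-- Here `z j` plays the role of `∇Φ (x j)`, so the sum is a weighted sum of Bregman divergences. -/
theorem inner_add_sum_bregman_eq {a : ι → ℝ} (ha : ∑ j, a j = 1) (Φ : E → ℝ) (g y : E)
    (x z : ι → E) :
    ⟪g, y⟫_ℝ + ∑ j, a j * (Φ y - Φ (x j) - ⟪z j, y - x j⟫_ℝ)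
      = Φ y - ⟪(∑ j, a j • z j) - g, y⟫_ℝ + ∑ j, a j * (⟪z j, x j⟫_ℝ - Φ (x j)) := by
  have hsplit : ∀ j, a j * (Φ y - Φ (x j) - ⟪z j, y - x j⟫_ℝ)
      = a j * Φ y - a j * ⟪z j, y⟫_ℝ + a j * (⟪z j, x j⟫_ℝ - Φ (x j)) := fun j => by
    rw [inner_sub_right]; ring
  simp only [hsplit, sum_add_distrib, sum_sub_distrib, ← sum_mul, ha, one_mul, inner_sub_left,
    sum_inner, real_inner_smul_left]
  ring

theorem ismd_interacting_md_bregman_proximal_general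
    (d N : ℕ)
    (Φ : EuclideanSpace ℝ (Fin d) → ℝ)
    (f' gΦ gΦstar : EuclideanSpace ℝ (Fin d) → EuclideanSpace ℝ (Fin d))
    (X : Set (EuclideanSpace ℝ (Fin d)))
    (A : Matrix (Fin N) (Fin N) ℝ)
    (hArow : ∀ i, ∑ j, A i j = 1)
    -- mirror map identities: ∇Φ ∘ ∇Φ* = id, ∇Φ*(ℝ^d) ⊆ X,
    -- and ∇Φ*(w) = argmin_{x∈X} (Φ(x) - ⟨w, x⟩)
    (hinv : ∀ w, gΦ (gΦstar w) = w)
    (hrange : ∀ w, gΦstar w ∈ X)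
    (hargmin : ∀ w, ∀ y ∈ X,
      Φ (gΦstar w) - (inner ℝ w (gΦstar w) : ℝ) ≤ Φ y - (inner ℝ w y : ℝ))
    (zk zk1 xk xk1 : Fin N → EuclideanSpace ℝ (Fin d))
    (hxk : ∀ i, xk i = gΦstar (zk i))
    -- the interacting mirror descent update (σ = 0, ε = 1)
    (hupd : ∀ i, zk1 i = zk i - f' (xk i) + ∑ j, A i j • (zk j - zk i))
    (hxk1 : ∀ i, xk1 i = gΦstar (zk1 i))
    (i : Fin N) :
    xk1 i ∈ X ∧ ∀ y ∈ X,
      (inner ℝ (f' (xk i)) (xk1 i) : ℝ)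
          + ∑ j, A i j * (Φ (xk1 i) - Φ (xk j) - (inner ℝ (gΦ (xk j)) (xk1 i - xk j) : ℝ))
        ≤ (inner ℝ (f' (xk i)) y : ℝ)
          + ∑ j, A i j * (Φ y - Φ (xk j) - (inner ℝ (gΦ (xk j)) (y - xk j) : ℝ)) := by
  have hgrad : ∀ j, gΦ (xk j) = zk j := fun j => by rw [hxk j, hinv]
  have hzk1 : zk1 i = (∑ j, A i j • zk j) - f' (xk i) := by
    rw [hupd i, sum_smul_sub_of_sum_eq_one (hArow i)]
    abel
  refine ⟨hxk1 i ▸ hrange _, fun y hy => ?_⟩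
  simp only [hgrad]
  rw [inner_add_sum_bregman_eq (hArow i), inner_add_sum_bregman_eq (hArow i), ← hzk1, hxk1 i]
  linarith [hargmin (zk1 i) y hy]

/-- The discrete interacting mirror descent update
`z_{k+1}^i = z_k^i - ∇f(x_k^i) + Σ_j A_{ij}(z_k^j - z_k^i)`, `x_{k+1}^i = ∇Φ*(z_{k+1}^i)`,
with `A` doubly stochastic, is equivalent to the Bregman-proximal update
`x_{k+1}^i = argmin_{x ∈ X} { ⟨∇f(x_k^i), x⟩ + Σ_j A_{ij} D_Φ(x, x_k^j) }`. -/
theorem ismd_interacting_md_bregman_proximal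
    (d N : ℕ)
    (f Φ : EuclideanSpace ℝ (Fin d) → ℝ)
    (f' gΦ gΦstar : EuclideanSpace ℝ (Fin d) → EuclideanSpace ℝ (Fin d))
    (X : Set (EuclideanSpace ℝ (Fin d)))
    (A : Matrix (Fin N) (Fin N) ℝ)
    (hA0 : ∀ i j, 0 ≤ A i j)
    (hArow : ∀ i, ∑ j, A i j = 1)
    (hAcol : ∀ j, ∑ i, A i j = 1)
    -- mirror map identities: ∇Φ ∘ ∇Φ* = id, ∇Φ*(ℝ^d) ⊆ X,
    -- and ∇Φ*(w) = argmin_{x∈X} (Φ(x) - ⟨w, x⟩)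
    (hinv : ∀ w, gΦ (gΦstar w) = w)
    (hrange : ∀ w, gΦstar w ∈ X)
    (hargmin : ∀ w, ∀ y ∈ X,
      Φ (gΦstar w) - (inner ℝ w (gΦstar w) : ℝ) ≤ Φ y - (inner ℝ w y : ℝ))
    (zk zk1 xk xk1 : Fin N → EuclideanSpace ℝ (Fin d))
    (hxk : ∀ i, xk i = gΦstar (zk i))
    -- the interacting mirror descent update (σ = 0, ε = 1)
    (hupd : ∀ i, zk1 i = zk i - f' (xk i) + ∑ j, A i j • (zk j - zk i))
    (hxk1 : ∀ i, xk1 i = gΦstar (zk1 i))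
    (i : Fin N) :
    xk1 i ∈ X ∧ ∀ y ∈ X,
      (inner ℝ (f' (xk i)) (xk1 i) : ℝ)
          + ∑ j, A i j * (Φ (xk1 i) - Φ (xk j) - (inner ℝ (gΦ (xk j)) (xk1 i - xk j) : ℝ))
        ≤ (inner ℝ (f' (xk i)) y : ℝ)
          + ∑ j, A i j * (Φ y - Φ (xk j) - (inner ℝ (gΦ (xk j)) (y - xk j) : ℝ)) :=
  ismd_interacting_md_bregman_proximal_general d N Φ f' gΦ gΦstar X A hArow hinv hrange hargmin zk
    zk1 xk xk1 hxk hupd hxk1 i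
end
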